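/- arXiv:2109.05630 — 2 statements merged into one kernel-verified Lean document; each statement's English description precedes it below -/
import Mathlib

section
/- Let f be defined on positive integers by f(1) = 1 and f(k) = max{ c·f(k − c) + 1 : 1 ≤ c ≤ k − 1 } for k ≥ 2. Then for every integer k ≥ 7, 2·f(k) < 3·f(k − 1). -/
/-- `f` is the integer sequence defined by `f 1 = 1` and, for `k ≥ 2`,
`f k = max { c * f (k - c) + 1 : 1 ≤ c ≤ k - 1 }`. -/
def fSpec (f : ℕ → ℕ) : Prop :=
  f 1 = 1 ∧ ∀ k : ℕ, 2 ≤ k →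
    IsGreatest {n : ℕ | ∃ c : ℕ, 1 ≤ c ∧ c ≤ k - 1 ∧ n = c * f (k - c) + 1} (f k)

/-- The explicit sequence that `fSpec` determines. -/
def g : ℕ → ℕ
  | 0 => 0
  | 1 => 1
  | 2 => 2
  | 3 => 3
  | 4 => 5
  | 5 => 7
  | 6 => 11
  | 7 => 16
  | 8 => 23
  | n + 9 => 3 * g (n + 6) + 1

lemma g_rec (n : ℕ) : g (n + 9) = 3 * g (n + 6) + 1 := by
  simp [g]

lemma g_pos : ∀ m, 1 ≤ m → 1 ≤ g m := by
  intro m hm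
  rcases Nat.lt_or_ge m 9 with h | h
  · interval_cases m <;> decide
  · obtain ⟨n, rfl⟩ : ∃ n, m = n + 9 := ⟨m - 9, by omega⟩
    rw [g_rec]; omega

lemma gM : ∀ m, 1 ≤ m → g m + 1 ≤ g (m + 1) := by
  intro m
  induction m using Nat.strong_induction_on with
  | _ m ih =>
    intro hm
    rcases Nat.lt_or_ge m 9 with h | h
    · interval_cases m <;> decide
    · obtain ⟨n, rfl⟩ : ∃ n, m = n + 9 := ⟨m - 9, by omega⟩
      have h1 : g (n + 9) = 3 * g (n + 6) + 1 := g_rec n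
      have h2 : g (n + 10) = 3 * g (n + 7) + 1 := g_rec (n + 1)
      have h3 := ih (n + 6) (by omega) (by omega)
      have e : n + 6 + 1 = n + 7 := by ring
      rw [e] at h3
      have e2 : n + 9 + 1 = n + 10 := by ring
      rw [e2]
      omega

lemma gA : ∀ m, 1 ≤ m → 3 * g m + 1 ≤ g (m + 3) := by
  intro m hm
  rcases Nat.lt_or_ge m 6 with h | h
  · interval_cases m <;> decide
  · obtain ⟨n, rfl⟩ : ∃ n, m = n + 6 := ⟨m - 6, by omega⟩
    rw [show n + 6 + 3 = n + 9 by ring, g_rec]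

lemma gE : ∀ m, 1 ≤ m → 2 * g m + 1 ≤ g (m + 2) := by
  intro m
  induction m using Nat.strong_induction_on with
  | _ m ih =>
    intro hm
    rcases Nat.lt_or_ge m 9 with h | h
    · interval_cases m <;> decide
    · obtain ⟨n, rfl⟩ : ∃ n, m = n + 9 := ⟨m - 9, by omega⟩
      have h1 : g (n + 9) = 3 * g (n + 6) + 1 := g_rec n
      have h2 : g (n + 11) = 3 * g (n + 8) + 1 := g_rec (n + 2)
      have h3 := ih (n + 6) (by omega) (by omega)
      have : n + 9 + 2 = n + 11 := by ring
      rw [this, h1, h2]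
      have : n + 6 + 2 = n + 8 := by ring
      rw [this] at h3
      omega

lemma gD : ∀ m, 1 ≤ m → 4 * g m + 1 ≤ 3 * g (m + 1) := by
  intro m
  induction m using Nat.strong_induction_on with
  | _ m ih =>
    intro hm
    rcases Nat.lt_or_ge m 9 with h | h
    · interval_cases m <;> decide
    · obtain ⟨n, rfl⟩ : ∃ n, m = n + 9 := ⟨m - 9, by omega⟩
      have h1 : g (n + 9) = 3 * g (n + 6) + 1 := g_rec n
      have h2 : g (n + 10) = 3 * g (n + 7) + 1 := g_rec (n + 1)
      have h3 := ih (n + 6) (by omega) (by omega)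
      have : n + 6 + 1 = n + 7 := by ring
      rw [this] at h3
      have : n + 9 + 1 = n + 10 := by ring
      rw [this, h1, h2]
      omega

lemma gC4 (m : ℕ) (hm : 1 ≤ m) : 4 * g m + 1 ≤ g (m + 4) := by
  have h1 := gD m hm
  have h2 := gA (m + 1) (by omega)
  have : m + 1 + 3 = m + 4 := by ring
  rw [this] at h2
  omega

lemma gC : ∀ c m, 1 ≤ c → 1 ≤ m → c * g m + 1 ≤ g (m + c) := by
  intro c
  induction c using Nat.strong_induction_on with
  | _ c ih =>
    intro m hc hm
    rcases Nat.lt_or_ge c 5 with h | h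
    · interval_cases c
      · simpa [Nat.add_comm] using gM m hm
      · simpa using gE m hm
      · simpa using gA m hm
      · simpa using gC4 m hm
    · obtain ⟨d, rfl⟩ : ∃ d, c = d + 3 := ⟨c - 3, by omega⟩
      have hd : 2 ≤ d := by omega
      have hA := gA m hm
      have hg := g_pos m hm
      have step1 : (d + 3) * g m ≤ d * (3 * g m + 1) := by nlinarith
      have step2 : d * (3 * g m + 1) ≤ d * g (m + 3) := Nat.mul_le_mul_left d hA
      have step : (d + 3) * g m ≤ d * g (m + 3) := le_trans step1 step2
      have hrec := ih d (by omega) (m + 3) (by omega) (by omega)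
      have : m + 3 + d = m + (d + 3) := by ring
      rw [this] at hrec
      omega

lemma g_mem : ∀ k, 2 ≤ k → ∃ c, 1 ≤ c ∧ c ≤ k - 1 ∧ g k = c * g (k - c) + 1 := by
  intro k hk
  rcases Nat.lt_or_ge k 9 with h | h
  · interval_cases k
    · exact ⟨1, by norm_num, by norm_num, by decide⟩
    · exact ⟨2, by norm_num, by norm_num, by decide⟩
    · exact ⟨2, by norm_num, by norm_num, by decide⟩
    · exact ⟨2, by norm_num, by norm_num, by decide⟩
    · exact ⟨2, by norm_num, by norm_num, by decide⟩
    · exact ⟨3, by norm_num, by norm_num, by decide⟩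
    · exact ⟨2, by norm_num, by norm_num, by decide⟩
  · obtain ⟨n, rfl⟩ : ∃ n, k = n + 9 := ⟨k - 9, by omega⟩
    refine ⟨3, by omega, by omega, ?_⟩
    have : n + 9 - 3 = n + 6 := by omega
    rw [this, g_rec]

lemma f_eq_g (f : ℕ → ℕ) (hf : fSpec f) : ∀ k, 1 ≤ k → f k = g k := by
  intro k
  induction k using Nat.strong_induction_on with
  | _ k ih =>
    intro hk
    rcases Nat.lt_or_ge k 2 with h | h
    · interval_cases k
      simpa [g] using hf.1
    · have H := hf.2 k h
      -- upper bound: f k ≤ g k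
      obtain ⟨c, hc1, hck, hfk⟩ := H.1
      have hck' : c < k := by omega
      have hkc1 : 1 ≤ k - c := by omega
      have hfg : f (k - c) = g (k - c) := ih (k - c) (by omega) hkc1
      have hle : f k ≤ g k := by
        rw [hfk, hfg]
        have := gC c (k - c) hc1 hkc1
        rwa [Nat.sub_add_cancel (le_of_lt hck')] at this
      -- lower bound: g k ≤ f k
      obtain ⟨c', hc'1, hc'k, hgk⟩ := g_mem k h
      have hc'k' : c' < k := by omega
      have hfg' : f (k - c') = g (k - c') := ih (k - c') (by omega) (by omega)
      have hge : g k ≤ f k := H.2 ⟨c', hc'1, hc'k, by rw [← hfg'] at hgk; exact hgk⟩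
      omega

lemma gT : ∀ k, 7 ≤ k → 2 * g k < 3 * g (k - 1) := by
  intro k
  induction k using Nat.strong_induction_on with
  | _ k ih =>
    intro hk
    rcases Nat.lt_or_ge k 10 with h | h
    · interval_cases k <;> decide
    · obtain ⟨n, rfl⟩ : ∃ n, k = n + 10 := ⟨k - 10, by omega⟩
      have h1 : g (n + 10) = 3 * g (n + 7) + 1 := g_rec (n + 1)
      have h2 : g (n + 9) = 3 * g (n + 6) + 1 := g_rec n
      have h3 := ih (n + 7) (by omega) (by omega)
      have e1 : n + 10 - 1 = n + 9 := by omega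
      have e2 : n + 7 - 1 = n + 6 := by omega
      rw [e2] at h3
      rw [e1, h1, h2]
      omega

/-- With `f` as above: for every `k ≥ 7`, `f k / f (k − 1) < 3/2`,
i.e. `2 * f k < 3 * f (k − 1)`. -/
theorem f_ratio_upper_bound (f : ℕ → ℕ) (hf : fSpec f) :
    ∀ k : ℕ, 7 ≤ k → 2 * f k < 3 * f (k - 1) := by
  intro k hk
  rw [f_eq_g f hf k (by omega), f_eq_g f hf (k - 1) (by omega)]
  exact gT k hk
end

section
/- Let f be defined on positive integers by f(1) = 1 and f(k) = max{ c·f(k − c) + 1 : 1 ≤ c ≤ k − 1 } for k ≥ 2, and for k ≥ 2 let g(k) = max{ f(y) + (r − 1)·f(x) : 2 ≤ r ≤ k, x + y + r − 2 = k, 1 ≤ x ≤ y ≤ ⌈k/2⌉ }. Then g(2) = 2, g(3) = 3, g(4) = 4, g(5) = 6, g(6) = 8, g(7) = 10, g(8) = 12, g(9) = 15, g(10) = 20, g(11) = 25, g(12) = 30, g(13) = 35, g(14) = 44; moreover g(k) = 6·f((k − 4)/2) for every even k ≥ 16, and g(k) = 5·f((k − 3)/2) for every odd k ≥ 15. -/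
/-- `g k = max { f y + (r − 1) * f x : 2 ≤ r ≤ k, x + y + r − 2 = k, 1 ≤ x ≤ y ≤ ⌈k/2⌉ }`
for `k ≥ 2` (note `⌈k/2⌉ = (k + 1) / 2` and `x + y + r − 2 = k ↔ x + y + r = k + 2`). -/
def gSpec (f g : ℕ → ℕ) : Prop :=
  ∀ k : ℕ, 2 ≤ k →
    IsGreatest {n : ℕ | ∃ r x y : ℕ, 2 ≤ r ∧ r ≤ k ∧ x + y + r = k + 2 ∧
      1 ≤ x ∧ x ≤ y ∧ y ≤ (k + 1) / 2 ∧ n = f y + (r - 1) * f x} (g k)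

set_option maxHeartbeats 1000000

section Aux

variable {f : ℕ → ℕ}

lemma flb (hf : fSpec f) (k c : ℕ) (hk : 2 ≤ k) (hc1 : 1 ≤ c) (hc2 : c ≤ k - 1) :
    c * f (k - c) + 1 ≤ f k := (hf.2 k hk).2 ⟨c, hc1, hc2, rfl⟩

lemma fub (hf : fSpec f) (k : ℕ) (hk : 2 ≤ k) :
    ∃ c, 1 ≤ c ∧ c ≤ k - 1 ∧ f k = c * f (k - c) + 1 := (hf.2 k hk).1

lemma fv2 (hf : fSpec f) : f 2 = 2 := by
  obtain ⟨c, hc1, hc2, he⟩ := fub hf 2 (by norm_num)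
  interval_cases c
  · norm_num [hf.1] at he; omega

lemma fv3 (hf : fSpec f) : f 3 = 3 := by
  obtain ⟨c, hc1, hc2, he⟩ := fub hf 3 (by norm_num)
  interval_cases c <;> norm_num [hf.1, fv2 hf] at he <;> omega
lemma fv4 (hf : fSpec f) : f 4 = 5 := by
  obtain ⟨c, hc1, hc2, he⟩ := fub hf 4 (by norm_num)
  have lb := flb hf 4 2 (by norm_num) (by norm_num) (by norm_num)
  interval_cases c <;> norm_num [hf.1, fv2 hf, fv3 hf] at he lb ⊢ <;> omega

lemma fv5 (hf : fSpec f) : f 5 = 7 := by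
  obtain ⟨c, hc1, hc2, he⟩ := fub hf 5 (by norm_num)
  have lb := flb hf 5 2 (by norm_num) (by norm_num) (by norm_num)
  interval_cases c <;> norm_num [hf.1, fv2 hf, fv3 hf, fv4 hf] at he lb ⊢ <;> omega

lemma fv6 (hf : fSpec f) : f 6 = 11 := by
  obtain ⟨c, hc1, hc2, he⟩ := fub hf 6 (by norm_num)
  have lb := flb hf 6 2 (by norm_num) (by norm_num) (by norm_num)
  interval_cases c <;> norm_num [hf.1, fv2 hf, fv3 hf, fv4 hf, fv5 hf] at he lb ⊢ <;> omega

lemma fv7 (hf : fSpec f) : f 7 = 16 := by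
  obtain ⟨c, hc1, hc2, he⟩ := fub hf 7 (by norm_num)
  have lb := flb hf 7 3 (by norm_num) (by norm_num) (by norm_num)
  interval_cases c <;> norm_num [hf.1, fv2 hf, fv3 hf, fv4 hf, fv5 hf, fv6 hf] at he lb ⊢ <;> omega

lemma fv8 (hf : fSpec f) : f 8 = 23 := by
  obtain ⟨c, hc1, hc2, he⟩ := fub hf 8 (by norm_num)
  have lb := flb hf 8 2 (by norm_num) (by norm_num) (by norm_num)
  interval_cases c <;> norm_num [hf.1, fv2 hf, fv3 hf, fv4 hf, fv5 hf, fv6 hf, fv7 hf] at he lb ⊢ <;> omega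

lemma fv9 (hf : fSpec f) : f 9 = 34 := by
  obtain ⟨c, hc1, hc2, he⟩ := fub hf 9 (by norm_num)
  have lb := flb hf 9 3 (by norm_num) (by norm_num) (by norm_num)
  interval_cases c <;> norm_num [hf.1, fv2 hf, fv3 hf, fv4 hf, fv5 hf, fv6 hf, fv7 hf, fv8 hf] at he lb ⊢ <;> omega

lemma fv10 (hf : fSpec f) : f 10 = 49 := by
  obtain ⟨c, hc1, hc2, he⟩ := fub hf 10 (by norm_num)
  have lb := flb hf 10 3 (by norm_num) (by norm_num) (by norm_num)
  interval_cases c <;> norm_num [hf.1, fv2 hf, fv3 hf, fv4 hf, fv5 hf, fv6 hf, fv7 hf, fv8 hf, fv9 hf] at he lb ⊢ <;> omega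

lemma fv11 (hf : fSpec f) : f 11 = 70 := by
  obtain ⟨c, hc1, hc2, he⟩ := fub hf 11 (by norm_num)
  have lb := flb hf 11 3 (by norm_num) (by norm_num) (by norm_num)
  interval_cases c <;> norm_num [hf.1, fv2 hf, fv3 hf, fv4 hf, fv5 hf, fv6 hf, fv7 hf, fv8 hf, fv9 hf, fv10 hf] at he lb ⊢ <;> omega


lemma fstep (hf : fSpec f) (n : ℕ) (hn : 1 ≤ n) : f n + 1 ≤ f (n+1) := by
  have := flb hf (n+1) 1 (by omega) le_rfl (by omega)
  simpa using this

lemma fmono (hf : fSpec f) {x y : ℕ} (hx : 1 ≤ x) (hxy : x ≤ y) : f x ≤ f y := by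
  induction y, hxy using Nat.le_induction with
  | base => exact le_rfl
  | succ y hy ih => have := fstep hf y (hx.trans hy); omega

lemma fpos (hf : fSpec f) {n : ℕ} (hn : 1 ≤ n) : 1 ≤ f n := by
  have := fmono hf (le_refl 1) hn; rw [hf.1] at this; exact this

lemma fge2 (hf : fSpec f) {n : ℕ} (hn : 2 ≤ n) : 2 ≤ f n := by
  have := fmono hf (by norm_num) hn; rw [fv2 hf] at this; exact this

lemma fge3 (hf : fSpec f) {n : ℕ} (hn : 3 ≤ n) : 3 ≤ f n := by
  have := fmono hf (by norm_num) hn; rw [fv3 hf] at this; exact this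

lemma fL2 (hf : fSpec f) (n : ℕ) (hn : 1 ≤ n) : 2 * f n + 1 ≤ f (n+2) := by
  have := flb hf (n+2) 2 (by omega) (by omega) (by omega)
  simpa using this

lemma fL3 (hf : fSpec f) (n : ℕ) (hn : 1 ≤ n) : 3 * f n + 1 ≤ f (n+3) := by
  have := flb hf (n+3) 3 (by omega) (by omega) (by omega)
  simpa using this

lemma fU1 (hf : fSpec f) (n : ℕ) (hn : 1 ≤ n) : f (n+1) ≤ 2 * f n := by
  obtain ⟨c, hc1, hc2, he⟩ := fub hf (n+1) (by omega)
  rcases Nat.lt_or_ge c 2 with h2 | h2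
  · have hc : c = 1 := by omega
    subst hc
    norm_num at he
    have := fpos hf hn; omega
  · have hn2 : 2 ≤ n := by omega
    obtain ⟨d, rfl⟩ : ∃ d, c = d + 2 := ⟨c - 2, by omega⟩
    have lb := flb hf n (d+1) (by omega) (by omega) (by omega)
    have e : n - (d+1) = n + 1 - (d+2) := by omega
    rw [e] at lb
    nlinarith [lb, he]

lemma fU1' (hf : fSpec f) (n : ℕ) (hn : 2 ≤ n) : f (n+1) + 1 ≤ 2 * f n := by
  obtain ⟨c, hc1, hc2, he⟩ := fub hf (n+1) (by omega)
  rcases Nat.lt_or_ge c 2 with h2 | h2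
  · have hc : c = 1 := by omega
    subst hc
    norm_num at he
    have := fge2 hf hn; omega
  · obtain ⟨d, rfl⟩ : ∃ d, c = d + 2 := ⟨c - 2, by omega⟩
    have lb := flb hf n (d+1) (by omega) (by omega) (by omega)
    have e : n - (d+1) = n + 1 - (d+2) := by omega
    rw [e] at lb
    nlinarith [lb, he]

lemma fU2 (hf : fSpec f) (n : ℕ) (hn : 1 ≤ n) : f (n+2) ≤ 3 * f n := by
  obtain ⟨c, hc1, hc2, he⟩ := fub hf (n+2) (by omega)
  rcases Nat.lt_or_ge c 3 with h3 | h3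
  · interval_cases c
    · have e : n + 2 - 1 = n + 1 := by omega
      rw [e] at he
      norm_num at he
      have := fU1 hf n hn
      have := fpos hf hn
      omega
    · norm_num at he
      have := fpos hf hn
      omega
  · have hn2 : 2 ≤ n := by omega
    obtain ⟨d, rfl⟩ : ∃ d, c = d + 3 := ⟨c - 3, by omega⟩
    have lb := flb hf n (d+1) (by omega) (by omega) (by omega)
    have e : n - (d+1) = n + 2 - (d+3) := by omega
    rw [e] at lb
    nlinarith [lb, he]

lemma fU2' (hf : fSpec f) (n : ℕ) (hn : 3 ≤ n) : f (n+2) + 2 ≤ 3 * f n := by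
  obtain ⟨c, hc1, hc2, he⟩ := fub hf (n+2) (by omega)
  rcases Nat.lt_or_ge c 3 with h3 | h3
  · interval_cases c
    · have e : n + 2 - 1 = n + 1 := by omega
      rw [e] at he
      norm_num at he
      have := fU1' hf n (by omega)
      have := fge2 hf (show 2 ≤ n by omega)
      omega
    · norm_num at he
      have := fge3 hf hn
      omega
  · obtain ⟨d, rfl⟩ : ∃ d, c = d + 3 := ⟨c - 3, by omega⟩
    have lb := flb hf n (d+1) (by omega) (by omega) (by omega)
    have e : n - (d+1) = n + 2 - (d+3) := by omega
    rw [e] at lb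
    nlinarith [lb, he]


lemma fQ (hf : fSpec f) : ∀ n : ℕ, 5 ≤ n →
    (4 * f n + 2 ≤ 3 * f (n+1)) ∧ (7 * f n + 2 ≤ 5 * f (n+1)) ∧
    (6 ≤ n → 2 * f (n+1) ≤ 3 * f n) ∧ (6 ≤ n → f (n+3) = 3 * f n + 1) := by
  intro n
  induction n using Nat.strong_induction_on with
  | _ n ih =>
  intro hn
  have hA : 6 ≤ n → 2 * f (n+1) ≤ 3 * f n := by
    intro h6
    rcases Nat.lt_or_ge n 9 with h9 | h9
    · interval_cases n <;> norm_num [fv6 hf, fv7 hf, fv8 hf, fv9 hf]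
    · have h2 := (ih (n-2) (by omega) (by omega)).2.2.2 (by omega)
      have h3 := (ih (n-3) (by omega) (by omega)).2.2.2 (by omega)
      have h4 := (ih (n-3) (by omega) (by omega)).2.2.1 (by omega)
      have e2 : n-2+3 = n+1 := by omega
      have e3 : n-3+3 = n := by omega
      have e4 : n-3+1 = n-2 := by omega
      rw [e2] at h2; rw [e3] at h3; rw [e4] at h4
      omega
  have hB : 4 * f n + 2 ≤ 3 * f (n+1) := by
    rcases Nat.lt_or_ge n 9 with h9 | h9
    · interval_cases n <;>
        norm_num [fv5 hf, fv6 hf, fv7 hf, fv8 hf, fv9 hf]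
    · have h2 := (ih (n-2) (by omega) (by omega)).2.2.2 (by omega)
      have h3 := (ih (n-3) (by omega) (by omega)).2.2.2 (by omega)
      have h4 := (ih (n-3) (by omega) (by omega)).1
      have e2 : n-2+3 = n+1 := by omega
      have e3 : n-3+3 = n := by omega
      have e4 : n-3+1 = n-2 := by omega
      rw [e2] at h2; rw [e3] at h3; rw [e4] at h4
      omega
  have hC : 7 * f n + 2 ≤ 5 * f (n+1) := by
    rcases Nat.lt_or_ge n 9 with h9 | h9
    · interval_cases n <;>
        norm_num [fv5 hf, fv6 hf, fv7 hf, fv8 hf, fv9 hf]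
    · have h2 := (ih (n-2) (by omega) (by omega)).2.2.2 (by omega)
      have h3 := (ih (n-3) (by omega) (by omega)).2.2.2 (by omega)
      have h4 := (ih (n-3) (by omega) (by omega)).2.1
      have e2 : n-2+3 = n+1 := by omega
      have e3 : n-3+3 = n := by omega
      have e4 : n-3+1 = n-2 := by omega
      rw [e2] at h2; rw [e3] at h3; rw [e4] at h4
      omega
  refine ⟨hB, hC, hA, ?_⟩
  intro h6
  have hlow := fL3 hf n (by omega)
  have hup : f (n+3) ≤ 3 * f n + 1 := by
    obtain ⟨c, hc1, hc2, he⟩ := fub hf (n+3) (by omega)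
    rcases Nat.lt_or_ge c 5 with h5 | h5
    · have hB1 := (ih (n-1) (by omega) (by omega)).1
      have e : n - 1 + 1 = n := by omega
      rw [e] at hB1
      interval_cases c
      · have e1 : n+3-1 = n+2 := by omega
        rw [e1] at he
        norm_num at he
        have := fU2 hf n (by omega)
        omega
      · have e1 : n+3-2 = n+1 := by omega
        rw [e1] at he
        have := hA h6
        omega
      · have e1 : n+3-3 = n := by omega
        rw [e1] at he
        omega
      · have e1 : n+3-4 = n-1 := by omega
        rw [e1] at he
        omega
    · obtain ⟨d, rfl⟩ : ∃ d, c = d+5 := ⟨c-5, by omega⟩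
      have lb := flb hf n (d+2) (by omega) (by omega) (by omega)
      have e : n - (d+2) = n+3-(d+5) := by omega
      rw [e] at lb
      nlinarith [lb, he]
  omega


lemma evenKey (hf : fSpec f) (u : ℕ) (hu : 6 ≤ u) :
    ∀ t x y : ℕ, 1 ≤ t → 1 ≤ x → x ≤ y → y ≤ u + 2 → x + y + t = 2*u + 5 →
    f y + t * f x ≤ 6 * f u := by
  intro t
  induction t using Nat.strong_induction_on with
  | _ t ih =>
  intro x y ht hx hxy hyu hsum
  rcases Nat.lt_or_ge t 5 with ht4 | ht5
  · have hcase : (x = u+2 ∧ y = u+2 ∧ t = 1) ∨ (x = u+1 ∧ y = u+2 ∧ t = 2)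
        ∨ (x = u+1 ∧ y = u+1 ∧ t = 3) ∨ (x = u ∧ y = u+2 ∧ t = 3)
        ∨ (x = u ∧ y = u+1 ∧ t = 4) ∨ (x + 1 = u ∧ y = u+2 ∧ t = 4) := by omega
    rcases hcase with ⟨h1,h2,h3⟩|⟨h1,h2,h3⟩|⟨h1,h2,h3⟩|⟨h1,h2,h3⟩|⟨h1,h2,h3⟩|⟨h1,h2,h3⟩ <;>
        subst h1 <;> subst h2 <;> subst h3
    · linarith [fU2 hf u (by omega)]
    · linarith [fU2' hf u (by omega), (fQ hf u (by omega)).2.2.1 (by omega)]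
    · linarith [(fQ hf u (by omega)).2.2.1 (by omega)]
    · linarith [fU2 hf x (by omega)]
    · linarith [fU1 hf x (by omega)]
    · have e : x + 1 + 2 = x + 3 := by omega
      rw [e]
      have h2' : f (x+1+2) + 2 ≤ 3 * f (x+1) := fU2' hf (x+1) (by omega)
      rw [e] at h2'
      linarith [(fQ hf x (by omega)).1, h2']
  · rcases Nat.lt_or_ge (x+2) y with hd | hd
    · -- move 1 : raise x by 3
      obtain ⟨s, rfl⟩ : ∃ s, t = s + 5 := ⟨t-5, by omega⟩
      have hih := ih (s+2) (by omega) (x+3) y (by omega) (by omega) (by omega) hyu (by omega)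
      have key : (s+2) * (3 * f x + 1) ≤ (s+2) * f (x+3) :=
        mul_le_mul_right (fL3 hf x hx) _
      nlinarith [hih, key]
    · rcases Nat.lt_or_ge t 8 with ht7 | ht8
      · have hcase : (x = u ∧ y = u ∧ t = 5) ∨ (x+1 = u ∧ y = u+1 ∧ t = 5)
            ∨ (x+1 = u ∧ y = u ∧ t = 6) ∨ (x+1 = u ∧ y+1 = u ∧ t = 7)
            ∨ (x+2 = u ∧ y = u ∧ t = 7) := by omega
        rcases hcase with ⟨h1,h2,h3⟩|⟨h1,h2,h3⟩|⟨h1,h2,h3⟩|⟨h1,h2,h3⟩|⟨h1,h2,h3⟩ <;>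
            subst h1 <;> subst h3
        · subst h2; linarith
        · subst h2
          linarith [fU1 hf (x+1) (by omega), (fQ hf x (by omega)).1]
        · subst h2; linarith [(fQ hf x (by omega)).2.1]
        · have hxy' : y = x := by omega
          subst hxy'
          linarith [(fQ hf y (by omega)).1]
        · subst h2; linarith [fL2 hf x (by omega)]
      · -- move 2 : raise x and y by 3
        obtain ⟨s, rfl⟩ : ∃ s, t = s + 8 := ⟨t-8, by omega⟩
        have hy3 : y + 3 ≤ u + 2 := by omega
        have hih := ih (s+2) (by omega) (x+3) (y+3) (by omega) (by omega) (by omega) hy3 (by omega)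
        have key : (s+2) * (3 * f x + 1) ≤ (s+2) * f (x+3) :=
          mul_le_mul_right (fL3 hf x hx) _
        nlinarith [hih, key, fL3 hf y (by omega), fmono hf hx hxy]

lemma oddKey (hf : fSpec f) (v : ℕ) (hv : 6 ≤ v) :
    ∀ t x y : ℕ, 1 ≤ t → 1 ≤ x → x ≤ y → y ≤ v + 2 → x + y + t = 2*v + 4 →
    f y + t * f x ≤ 5 * f v := by
  intro t
  induction t using Nat.strong_induction_on with
  | _ t ih =>
  intro x y ht hx hxy hyu hsum
  rcases Nat.lt_or_ge t 5 with ht4 | ht5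
  · have hcase : (x = v+1 ∧ y = v+2 ∧ t = 1) ∨ (x = v ∧ y = v+2 ∧ t = 2)
        ∨ (x = v+1 ∧ y = v+1 ∧ t = 2) ∨ (x+1 = v ∧ y = v+2 ∧ t = 3)
        ∨ (x = v ∧ y = v+1 ∧ t = 3) ∨ (x = v ∧ y = v ∧ t = 4)
        ∨ (x+1 = v ∧ y = v+1 ∧ t = 4) ∨ (x+2 = v ∧ y = v+2 ∧ t = 4) := by omega
    rcases hcase with ⟨h1,h2,h3⟩|⟨h1,h2,h3⟩|⟨h1,h2,h3⟩|⟨h1,h2,h3⟩|⟨h1,h2,h3⟩|⟨h1,h2,h3⟩|⟨h1,h2,h3⟩|⟨h1,h2,h3⟩ <;>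
        subst h1 <;> subst h2 <;> subst h3
    · linarith [fU2' hf v (by omega), fU1 hf v (by omega)]
    · linarith [fU2 hf x (by omega)]
    · linarith [(fQ hf v (by omega)).2.2.1 (by omega)]
    · -- x+1 = v, y = v+2, t = 3
      have e : x + 1 + 2 = x + 3 := by omega
      rw [e]
      rcases Nat.lt_or_ge x 6 with h6 | h6
      · have hx5 : x = 5 := by omega
        subst hx5
        norm_num [fv5 hf, fv6 hf, fv8 hf]
      · have hR := (fQ hf x (by omega)).2.2.2 (by omega)
        linarith [(fQ hf x (by omega)).1, hR]
    · linarith [fU1 hf x (by omega)]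
    · linarith
    · linarith [(fQ hf (x+1) (by omega)).2.2.1 (by omega), (fQ hf x (by omega)).1]
    · have e : x + 2 + 2 = x + 4 := by omega
      rw [e]
      have h2' : f (x+2+2) ≤ 3 * f (x+2) := fU2 hf (x+2) (by omega)
      rw [e] at h2'
      linarith [h2', fL2 hf x (by omega)]
  · rcases Nat.lt_or_ge (x+2) y with hd | hd
    · obtain ⟨s, rfl⟩ : ∃ s, t = s + 5 := ⟨t-5, by omega⟩
      have hih := ih (s+2) (by omega) (x+3) y (by omega) (by omega) (by omega) hyu (by omega)
      have key : (s+2) * (3 * f x + 1) ≤ (s+2) * f (x+3) :=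
        mul_le_mul_right (fL3 hf x hx) _
      nlinarith [hih, key]
    · rcases Nat.lt_or_ge t 8 with ht7 | ht8
      · have hcase : (x+1 = v ∧ y = v ∧ t = 5) ∨ (x+1 = v ∧ y+1 = v ∧ t = 6)
            ∨ (x+2 = v ∧ y = v ∧ t = 6) ∨ (x+2 = v ∧ y+1 = v ∧ t = 7) := by omega
        rcases hcase with ⟨h1,h2,h3⟩|⟨h1,h2,h3⟩|⟨h1,h2,h3⟩|⟨h1,h2,h3⟩ <;> subst h1 <;> subst h3
        · subst h2; linarith [(fQ hf x (by omega)).1]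
        · have hxy' : y = x := by omega
          subst hxy'
          linarith [(fQ hf y (by omega)).2.1]
        · subst h2; linarith [fL2 hf x (by omega)]
        · have hxy' : y = x + 1 := by omega
          subst hxy'
          linarith [fU1 hf x (by omega), fL2 hf x (by omega)]
      · obtain ⟨s, rfl⟩ : ∃ s, t = s + 8 := ⟨t-8, by omega⟩
        have hy3 : y + 3 ≤ v + 2 := by omega
        have hih := ih (s+2) (by omega) (x+3) (y+3) (by omega) (by omega) (by omega) hy3 (by omega)
        have key : (s+2) * (3 * f x + 1) ≤ (s+2) * f (x+3) :=
          mul_le_mul_right (fL3 hf x hx) _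
        nlinarith [hih, key, fL3 hf y (by omega), fmono hf hx hxy]

end Aux

/-- With `f` and `g` as above: the initial values
`g 2 = 2, …, g 14 = 44`, and `g k = 6·f((k−4)/2)` for even `k ≥ 16`, while
`g k = 5·f((k−3)/2)` for odd `k ≥ 15`. -/
theorem g_closed_form (f g : ℕ → ℕ) (hf : fSpec f) (hg : gSpec f g) :
    g 2 = 2 ∧ g 3 = 3 ∧ g 4 = 4 ∧ g 5 = 6 ∧ g 6 = 8 ∧ g 7 = 10 ∧ g 8 = 12 ∧
    g 9 = 15 ∧ g 10 = 20 ∧ g 11 = 25 ∧ g 12 = 30 ∧ g 13 = 35 ∧ g 14 = 44 ∧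
    (∀ k : ℕ, 16 ≤ k → Even k → g k = 6 * f ((k - 4) / 2)) ∧
    (∀ k : ℕ, 15 ≤ k → Odd k → g k = 5 * f ((k - 3) / 2)) := by
  have hg2 : g 2 = 2 := by
    obtain ⟨⟨r,x,y,hr2,hrk,hsum,hx,hxy,hy,heq⟩, hub⟩ := hg 2 (by norm_num)
    have hlow : 2 ≤ g 2 := hub ⟨2, 1, 1, by norm_num, by norm_num, by norm_num,
      by norm_num, by norm_num, by norm_num, by norm_num [hf.1, fv2 hf, fv3 hf, fv4 hf, fv5 hf, fv6 hf, fv7 hf]⟩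
    obtain rfl : r = 2 + 2 - x - y := by omega
    norm_num at hy
    interval_cases y <;> interval_cases x <;>
      (try simp only [hf.1, fv2 hf, fv3 hf, fv4 hf, fv5 hf, fv6 hf, fv7 hf] at heq) <;> omega
  have hg3 : g 3 = 3 := by
    obtain ⟨⟨r,x,y,hr2,hrk,hsum,hx,hxy,hy,heq⟩, hub⟩ := hg 3 (by norm_num)
    have hlow : 3 ≤ g 3 := hub ⟨3, 1, 1, by norm_num, by norm_num, by norm_num,
      by norm_num, by norm_num, by norm_num, by norm_num [hf.1, fv2 hf, fv3 hf, fv4 hf, fv5 hf, fv6 hf, fv7 hf]⟩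
    obtain rfl : r = 3 + 2 - x - y := by omega
    norm_num at hy
    interval_cases y <;> interval_cases x <;>
      (try simp only [hf.1, fv2 hf, fv3 hf, fv4 hf, fv5 hf, fv6 hf, fv7 hf] at heq) <;> omega
  have hg4 : g 4 = 4 := by
    obtain ⟨⟨r,x,y,hr2,hrk,hsum,hx,hxy,hy,heq⟩, hub⟩ := hg 4 (by norm_num)
    have hlow : 4 ≤ g 4 := hub ⟨4, 1, 1, by norm_num, by norm_num, by norm_num,
      by norm_num, by norm_num, by norm_num, by norm_num [hf.1, fv2 hf, fv3 hf, fv4 hf, fv5 hf, fv6 hf, fv7 hf]⟩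
    obtain rfl : r = 4 + 2 - x - y := by omega
    norm_num at hy
    interval_cases y <;> interval_cases x <;>
      (try simp only [hf.1, fv2 hf, fv3 hf, fv4 hf, fv5 hf, fv6 hf, fv7 hf] at heq) <;> omega
  have hg5 : g 5 = 6 := by
    obtain ⟨⟨r,x,y,hr2,hrk,hsum,hx,hxy,hy,heq⟩, hub⟩ := hg 5 (by norm_num)
    have hlow : 6 ≤ g 5 := hub ⟨3, 2, 2, by norm_num, by norm_num, by norm_num,
      by norm_num, by norm_num, by norm_num, by norm_num [hf.1, fv2 hf, fv3 hf, fv4 hf, fv5 hf, fv6 hf, fv7 hf]⟩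
    obtain rfl : r = 5 + 2 - x - y := by omega
    norm_num at hy
    interval_cases y <;> interval_cases x <;>
      (try simp only [hf.1, fv2 hf, fv3 hf, fv4 hf, fv5 hf, fv6 hf, fv7 hf] at heq) <;> omega
  have hg6 : g 6 = 8 := by
    obtain ⟨⟨r,x,y,hr2,hrk,hsum,hx,hxy,hy,heq⟩, hub⟩ := hg 6 (by norm_num)
    have hlow : 8 ≤ g 6 := hub ⟨4, 2, 2, by norm_num, by norm_num, by norm_num,
      by norm_num, by norm_num, by norm_num, by norm_num [hf.1, fv2 hf, fv3 hf, fv4 hf, fv5 hf, fv6 hf, fv7 hf]⟩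
    obtain rfl : r = 6 + 2 - x - y := by omega
    norm_num at hy
    interval_cases y <;> interval_cases x <;>
      (try simp only [hf.1, fv2 hf, fv3 hf, fv4 hf, fv5 hf, fv6 hf, fv7 hf] at heq) <;> omega
  have hg7 : g 7 = 10 := by
    obtain ⟨⟨r,x,y,hr2,hrk,hsum,hx,hxy,hy,heq⟩, hub⟩ := hg 7 (by norm_num)
    have hlow : 10 ≤ g 7 := hub ⟨5, 2, 2, by norm_num, by norm_num, by norm_num,
      by norm_num, by norm_num, by norm_num, by norm_num [hf.1, fv2 hf, fv3 hf, fv4 hf, fv5 hf, fv6 hf, fv7 hf]⟩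
    obtain rfl : r = 7 + 2 - x - y := by omega
    norm_num at hy
    interval_cases y <;> interval_cases x <;>
      (try simp only [hf.1, fv2 hf, fv3 hf, fv4 hf, fv5 hf, fv6 hf, fv7 hf] at heq) <;> omega
  have hg8 : g 8 = 12 := by
    obtain ⟨⟨r,x,y,hr2,hrk,hsum,hx,hxy,hy,heq⟩, hub⟩ := hg 8 (by norm_num)
    have hlow : 12 ≤ g 8 := hub ⟨6, 2, 2, by norm_num, by norm_num, by norm_num,
      by norm_num, by norm_num, by norm_num, by norm_num [hf.1, fv2 hf, fv3 hf, fv4 hf, fv5 hf, fv6 hf, fv7 hf]⟩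
    obtain rfl : r = 8 + 2 - x - y := by omega
    norm_num at hy
    interval_cases y <;> interval_cases x <;>
      (try simp only [hf.1, fv2 hf, fv3 hf, fv4 hf, fv5 hf, fv6 hf, fv7 hf] at heq) <;> omega
  have hg9 : g 9 = 15 := by
    obtain ⟨⟨r,x,y,hr2,hrk,hsum,hx,hxy,hy,heq⟩, hub⟩ := hg 9 (by norm_num)
    have hlow : 15 ≤ g 9 := hub ⟨5, 3, 3, by norm_num, by norm_num, by norm_num,
      by norm_num, by norm_num, by norm_num, by norm_num [hf.1, fv2 hf, fv3 hf, fv4 hf, fv5 hf, fv6 hf, fv7 hf]⟩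
    obtain rfl : r = 9 + 2 - x - y := by omega
    norm_num at hy
    interval_cases y <;> interval_cases x <;>
      (try simp only [hf.1, fv2 hf, fv3 hf, fv4 hf, fv5 hf, fv6 hf, fv7 hf] at heq) <;> omega
  have hg10 : g 10 = 20 := by
    obtain ⟨⟨r,x,y,hr2,hrk,hsum,hx,hxy,hy,heq⟩, hub⟩ := hg 10 (by norm_num)
    have hlow : 20 ≤ g 10 := hub ⟨4, 4, 4, by norm_num, by norm_num, by norm_num,
      by norm_num, by norm_num, by norm_num, by norm_num [hf.1, fv2 hf, fv3 hf, fv4 hf, fv5 hf, fv6 hf, fv7 hf]⟩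
    obtain rfl : r = 10 + 2 - x - y := by omega
    norm_num at hy
    interval_cases y <;> interval_cases x <;>
      (try simp only [hf.1, fv2 hf, fv3 hf, fv4 hf, fv5 hf, fv6 hf, fv7 hf] at heq) <;> omega
  have hg11 : g 11 = 25 := by
    obtain ⟨⟨r,x,y,hr2,hrk,hsum,hx,hxy,hy,heq⟩, hub⟩ := hg 11 (by norm_num)
    have hlow : 25 ≤ g 11 := hub ⟨5, 4, 4, by norm_num, by norm_num, by norm_num,
      by norm_num, by norm_num, by norm_num, by norm_num [hf.1, fv2 hf, fv3 hf, fv4 hf, fv5 hf, fv6 hf, fv7 hf]⟩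
    obtain rfl : r = 11 + 2 - x - y := by omega
    norm_num at hy
    interval_cases y <;> interval_cases x <;>
      (try simp only [hf.1, fv2 hf, fv3 hf, fv4 hf, fv5 hf, fv6 hf, fv7 hf] at heq) <;> omega
  have hg12 : g 12 = 30 := by
    obtain ⟨⟨r,x,y,hr2,hrk,hsum,hx,hxy,hy,heq⟩, hub⟩ := hg 12 (by norm_num)
    have hlow : 30 ≤ g 12 := hub ⟨6, 4, 4, by norm_num, by norm_num, by norm_num,
      by norm_num, by norm_num, by norm_num, by norm_num [hf.1, fv2 hf, fv3 hf, fv4 hf, fv5 hf, fv6 hf, fv7 hf]⟩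
    obtain rfl : r = 12 + 2 - x - y := by omega
    norm_num at hy
    interval_cases y <;> interval_cases x <;>
      (try simp only [hf.1, fv2 hf, fv3 hf, fv4 hf, fv5 hf, fv6 hf, fv7 hf] at heq) <;> omega
  have hg13 : g 13 = 35 := by
    obtain ⟨⟨r,x,y,hr2,hrk,hsum,hx,hxy,hy,heq⟩, hub⟩ := hg 13 (by norm_num)
    have hlow : 35 ≤ g 13 := hub ⟨5, 5, 5, by norm_num, by norm_num, by norm_num,
      by norm_num, by norm_num, by norm_num, by norm_num [hf.1, fv2 hf, fv3 hf, fv4 hf, fv5 hf, fv6 hf, fv7 hf]⟩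
    obtain rfl : r = 13 + 2 - x - y := by omega
    norm_num at hy
    interval_cases y <;> interval_cases x <;>
      (try simp only [hf.1, fv2 hf, fv3 hf, fv4 hf, fv5 hf, fv6 hf, fv7 hf] at heq) <;> omega
  have hg14 : g 14 = 44 := by
    obtain ⟨⟨r,x,y,hr2,hrk,hsum,hx,hxy,hy,heq⟩, hub⟩ := hg 14 (by norm_num)
    have hlow : 44 ≤ g 14 := hub ⟨4, 6, 6, by norm_num, by norm_num, by norm_num,
      by norm_num, by norm_num, by norm_num, by norm_num [hf.1, fv2 hf, fv3 hf, fv4 hf, fv5 hf, fv6 hf, fv7 hf]⟩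
    obtain rfl : r = 14 + 2 - x - y := by omega
    norm_num at hy
    interval_cases y <;> interval_cases x <;>
      (try simp only [hf.1, fv2 hf, fv3 hf, fv4 hf, fv5 hf, fv6 hf, fv7 hf] at heq) <;> omega
  have heven : ∀ k : ℕ, 16 ≤ k → Even k → g k = 6 * f ((k - 4) / 2) := by
    intro k hk hke
    obtain ⟨m, rfl⟩ := hke
    obtain ⟨u, rfl⟩ : ∃ u, m = u + 2 := ⟨m - 2, by omega⟩
    have hu : 6 ≤ u := by omega
    have e : ((u+2) + (u+2) - 4) / 2 = u := by omega
    rw [e]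
    obtain ⟨⟨r,x,y,hr2,hrk,hsum,hx,hxy,hy,heq⟩, hub⟩ := hg ((u+2)+(u+2)) (by omega)
    have hyu : y ≤ u + 2 := by omega
    have hup : g ((u+2)+(u+2)) ≤ 6 * f u := by
      rw [heq]
      exact evenKey hf u hu (r-1) x y (by omega) hx hxy hyu (by omega)
    have hlow : 6 * f u ≤ g ((u+2)+(u+2)) :=
      hub ⟨6, u, u, by omega, by omega, by omega, by omega, le_rfl, by omega, by omega⟩
    omega
  have hodd : ∀ k : ℕ, 15 ≤ k → Odd k → g k = 5 * f ((k - 3) / 2) := by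
    intro k hk hko
    obtain ⟨m, rfl⟩ := hko
    obtain ⟨v, rfl⟩ : ∃ v, m = v + 1 := ⟨m - 1, by omega⟩
    have hv : 6 ≤ v := by omega
    have e : (2 * (v+1) + 1 - 3) / 2 = v := by omega
    rw [e]
    obtain ⟨⟨r,x,y,hr2,hrk,hsum,hx,hxy,hy,heq⟩, hub⟩ := hg (2*(v+1)+1) (by omega)
    have hyu : y ≤ v + 2 := by omega
    have hup : g (2*(v+1)+1) ≤ 5 * f v := by
      rw [heq]
      exact oddKey hf v hv (r-1) x y (by omega) (by omega) hxy hyu (by omega)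
    have hlow : 5 * f v ≤ g (2*(v+1)+1) :=
      hub ⟨5, v, v, by omega, by omega, by omega, by omega, le_rfl, by omega, by omega⟩
    omega
  exact ⟨hg2, hg3, hg4, hg5, hg6, hg7, hg8, hg9, hg10, hg11, hg12, hg13, hg14, heven, hodd⟩
end
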